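/- arXiv:2310.11711 — 7 statements merged into one kernel-verified Lean document; each statement's English description precedes it below -/
import Mathlib

section
/- Let Y be a real-valued random variable on a probability space, let F(t) = P(Y ≤ t) be its cumulative distribution function, let τ ∈ (0,1), and let a ∈ ℝ satisfy F(a) = τ. Then for every δ ∈ ℝ, the random variable ρ_τ(Y − a − δ) − ρ_τ(Y − a) is bounded in absolute value by |δ| (hence integrable), and E[ρ_τ(Y − a − δ) − ρ_τ(Y − a)] = ∫_0^δ (F(a + z) − F(a)) dz, where ∫_0^δ denotes the signed integral. -/
/-!
The increment of the check loss is `ρ_τ(u - δ) - ρ_τ(u) = (max δ u - max 0 u) - τ δ`, and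
`max δ u - max 0 u = ∫_0^δ 1[u ≤ z] dz`. Taking expectations with `u = Y - a` and swapping the
two integrals (Fubini) turns the indicator into `F (a + z)`, while `τ δ = ∫_0^δ F a dz`.
-/

open MeasureTheory intervalIntegral Set

noncomputable def checkLoss (τ u : ℝ) : ℝ := max (τ * u) ((τ - 1) * u)

lemma checkLoss_eq_mul_sub_min (τ u : ℝ) : checkLoss τ u = τ * u - min u 0 := by
  rcases le_total 0 u with h | h
  · rw [checkLoss, max_eq_left (by nlinarith), min_eq_right h, sub_zero]
  · rw [checkLoss, max_eq_right (by nlinarith), min_eq_left h]; ring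

lemma checkLoss_sub_sub_checkLoss (τ u δ : ℝ) :
    checkLoss τ (u - δ) - checkLoss τ u = max δ u - max 0 u - τ * δ := by
  simp only [checkLoss_eq_mul_sub_min, min_def, max_def]
  split_ifs <;> linarith

lemma abs_checkLoss_sub_checkLoss_le {τ : ℝ} (hτ : τ ∈ Icc (0 : ℝ) 1) (u v : ℝ) :
    |checkLoss τ u - checkLoss τ v| ≤ |u - v| := by
  refine (abs_max_sub_max_le_max _ _ _ _).trans (max_le ?_ ?_)
  · rw [← mul_sub, abs_mul, abs_of_nonneg hτ.1]
    exact mul_le_of_le_one_left (abs_nonneg _) hτ.2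
  · rw [← mul_sub, abs_mul, abs_of_nonpos (by linarith [hτ.2])]
    exact mul_le_of_le_one_left (abs_nonneg _) (by linarith [hτ.1])

lemma intervalIntegral_indicator_Ici_one_of_le (c : ℝ) {l u : ℝ} (hlu : l ≤ u) :
    ∫ z in l..u, (Ici c).indicator 1 z = max u c - max l c := by
  have hae : (Ici c).indicator (1 : ℝ → ℝ) =ᵐ[volume.restrict (Ioc l u)] (Ioi c).indicator 1 :=
    ae_restrict_of_ae (indicator_ae_eq_of_ae_eq_set Ioi_ae_eq_Ici.symm)
  rw [integral_of_le hlu, integral_congr_ae hae, integral_indicator_one measurableSet_Ioi,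
    measureReal_restrict_apply measurableSet_Ioi, inter_comm, Ioc_inter_Ioi, Real.volume_real_Ioc]
  simp only [max_def]
  split_ifs <;> linarith

lemma intervalIntegral_indicator_Ici_one (c l u : ℝ) :
    ∫ z in l..u, (Ici c).indicator 1 z = max u c - max l c := by
  rcases le_total l u with h | h
  · exact intervalIntegral_indicator_Ici_one_of_le c h
  · rw [integral_symm, intervalIntegral_indicator_Ici_one_of_le c h, neg_sub]

section

variable {Ω : Type*} [MeasurableSpace Ω] {μ : Measure Ω} [IsFiniteMeasure μ]

lemma integral_max_sub_max_eq_intervalIntegral_measureReal {X : Ω → ℝ} (hX : Measurable X)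
    (l u : ℝ) :
    ∫ ω, (max u (X ω) - max l (X ω)) ∂μ = ∫ z in l..u, μ.real {ω | X ω ≤ z} := by
  have hfin : IsFiniteMeasure (volume.restrict (uIoc l u)) := by
    rw [isFiniteMeasure_restrict, uIoc]; exact measure_Ioc_lt_top.ne
  let f : ℝ → Ω → ℝ := fun z ω => (Ici (X ω)).indicator 1 z
  have hf : Function.uncurry f = {p : ℝ × Ω | X p.2 ≤ p.1}.indicator 1 := by
    ext ⟨z, ω⟩; simp [f, indicator_apply]
  have hint : Integrable (Function.uncurry f) ((volume.restrict (uIoc l u)).prod μ) := by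
    rw [hf]
    exact (integrable_const 1).indicator (measurableSet_le (hX.comp measurable_snd) measurable_fst)
  calc ∫ ω, (max u (X ω) - max l (X ω)) ∂μ = ∫ ω, (∫ z in l..u, f z ω) ∂μ := by
        simp_rw [f, intervalIntegral_indicator_Ici_one]
    _ = ∫ z in l..u, ∫ ω, f z ω ∂μ := (intervalIntegral_integral_swap hint).symm
    _ = ∫ z in l..u, μ.real {ω | X ω ≤ z} := by
        congr 1 with z
        rw [← integral_indicator_one (measurableSet_le hX measurable_const)]
        rfl

end

/-- Let `Y` be a real random variable on a probability space with CDF `F`, let `τ ∈ (0,1)`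
and let `a` be a `τ`-quantile, i.e. `F a = τ`.  Then for every `δ ∈ ℝ` the random variable
`ρ_τ(Y − a − δ) − ρ_τ(Y − a)` is bounded by `|δ|` (hence integrable), and its expectation
equals the signed integral `∫_0^δ (F(a+z) − F(a)) dz`. -/
theorem expectation_checkLoss_increment
    {Ω : Type*} [MeasurableSpace Ω] (μ : Measure Ω) [IsProbabilityMeasure μ]
    (Y : Ω → ℝ) (hY : Measurable Y)
    (F : ℝ → ℝ) (hF : ∀ t, F t = (μ {ω | Y ω ≤ t}).toReal)
    (τ : ℝ) (hτ : τ ∈ Set.Ioo (0 : ℝ) 1) (a : ℝ) (ha : F a = τ) (δ : ℝ) :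
    (∀ ω, |checkLoss τ (Y ω - a - δ) - checkLoss τ (Y ω - a)| ≤ |δ|) ∧
    Integrable (fun ω => checkLoss τ (Y ω - a - δ) - checkLoss τ (Y ω - a)) μ ∧
    ∫ ω, (checkLoss τ (Y ω - a - δ) - checkLoss τ (Y ω - a)) ∂μ =
      ∫ z in (0 : ℝ)..δ, (F (a + z) - F a) := by
  have hbound ω : |checkLoss τ (Y ω - a - δ) - checkLoss τ (Y ω - a)| ≤ |δ| := by
    simpa using abs_checkLoss_sub_checkLoss_le (Ioo_subset_Icc_self hτ) (Y ω - a - δ) (Y ω - a)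
  have hmeas : Measurable fun ω => checkLoss τ (Y ω - a - δ) - checkLoss τ (Y ω - a) := by
    unfold checkLoss; fun_prop
  refine ⟨hbound, Integrable.of_bound hmeas.aestronglyMeasurable |δ| (ae_of_all _ hbound), ?_⟩
  have hFmono : Monotone F := fun s t hst => by
    simp only [hF, ← measureReal_def]
    exact measureReal_mono fun ω (h : Y ω ≤ s) => h.trans hst
  have hFint : IntervalIntegrable (fun z => F (a + z)) volume 0 δ :=
    ((hFmono.comp (monotone_id.const_add a)).monotoneOn _).intervalIntegrable
  have hmax : Integrable (fun ω => max δ (Y ω - a) - max 0 (Y ω - a)) μ := by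
    refine Integrable.of_bound (by fun_prop) |δ| (ae_of_all _ fun ω => ?_)
    simpa using abs_max_sub_max_le_abs δ 0 (Y ω - a)
  simp_rw [checkLoss_sub_sub_checkLoss]
  rw [integral_sub hmax (integrable_const _), integral_max_sub_max_eq_intervalIntegral_measureReal
    (hY.sub_const a), integral_sub hFint intervalIntegrable_const]
  have hcdf z : μ.real {ω | Y ω - a ≤ z} = F (a + z) := by
    rw [hF, ← measureReal_def]; simp_rw [sub_le_iff_le_add']
  simp_rw [hcdf]
  simp [ha, mul_comm]
end

section
/- Let F : ℝ → ℝ be nondecreasing, and let a ∈ ℝ, L > 0 and f̲ > 0 be such that |F(a + z) − F(a)| ≥ f̲·|z| for every z with |z| ≤ L. Then for every δ ∈ ℝ, ∫_0^δ (F(a + z) − F(a)) dz ≥ c · min{|δ|, δ²}, where c = min{f̲/2, L·f̲/4} and ∫_0^δ denotes the signed integral (which is nonnegative here since the integrand is nonnegative for z ≥ 0 and nonpositive for z ≤ 0). -/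
open intervalIntegral MeasureTheory

private lemma key_nonneg
    (F : ℝ → ℝ) (hF : Monotone F) (a L fbar : ℝ) (hL : 0 < L) (hfbar : 0 < fbar)
    (hgrowth : ∀ z : ℝ, |z| ≤ L → fbar * |z| ≤ |F (a + z) - F a|) (δ : ℝ) (hδ : 0 ≤ δ) :
    min (fbar / 2) (L * fbar / 4) * min |δ| (δ ^ 2) ≤
      ∫ z in (0 : ℝ)..δ, (F (a + z) - F a) := by
  have hg_int : ∀ c d : ℝ, IntervalIntegrable (fun z => F (a + z) - F a) volume c d := by
    intro c d
    apply Monotone.intervalIntegrable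
    intro x y h
    simp only [sub_le_sub_iff_right]
    exact hF (by linarith)
  have hptwise : ∀ z : ℝ, 0 ≤ z → z ≤ L → fbar * z ≤ F (a + z) - F a := by
    intro z hz0 hzL
    have h0 : 0 ≤ F (a + z) - F a := sub_nonneg.mpr (hF (by linarith))
    have := hgrowth z (by rwa [abs_of_nonneg hz0])
    rwa [abs_of_nonneg hz0, abs_of_nonneg h0] at this
  have hquad : ∀ d : ℝ, 0 ≤ d → d ≤ L →
      fbar * (d ^ 2 / 2) ≤ ∫ z in (0 : ℝ)..d, (F (a + z) - F a) := by
    intro d hd0 hdL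
    have h1 : ∫ z in (0 : ℝ)..d, fbar * z ≤ ∫ z in (0 : ℝ)..d, (F (a + z) - F a) := by
      apply intervalIntegral.integral_mono_on hd0
        ((_root_.intervalIntegrable_const).mul_continuousOn (Continuous.continuousOn (by continuity)))
        (hg_int 0 d)
      intro z hz
      exact hptwise z hz.1 (le_trans hz.2 hdL)
    have h2 : ∫ z in (0 : ℝ)..d, fbar * z = fbar * (d ^ 2 / 2) := by
      rw [intervalIntegral.integral_const_mul, integral_id]
      ring
    linarith [h1, h2.symm.le]
  have hc2 : min (fbar / 2) (L * fbar / 4) ≤ fbar / 2 := min_le_left _ _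
  have hc4 : min (fbar / 2) (L * fbar / 4) ≤ L * fbar / 4 := min_le_right _ _
  have hc0 : 0 ≤ min (fbar / 2) (L * fbar / 4) := le_min (by linarith) (by positivity)
  have hm2 : min |δ| (δ ^ 2) ≤ δ ^ 2 := min_le_right _ _
  have hm1 : min |δ| (δ ^ 2) ≤ δ := (min_le_left _ _).trans (abs_of_nonneg hδ).le
  have hm0 : 0 ≤ min |δ| (δ ^ 2) := le_min (abs_nonneg _) (sq_nonneg _)
  rcases le_or_gt δ L with hcase | hcase
  · have := hquad δ hδ hcase
    nlinarith [mul_le_mul hc2 hm2 hm0 (by linarith : (0:ℝ) ≤ fbar / 2)]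
  · have h1 := hquad L hL.le le_rfl
    have hFL : fbar * L ≤ F (a + L) - F a := hptwise L hL.le le_rfl
    have h2 : ∫ z in L..δ, (fbar * L) ≤ ∫ z in L..δ, (F (a + z) - F a) := by
      apply intervalIntegral.integral_mono_on hcase.le intervalIntegrable_const (hg_int L δ)
      intro z hz
      have : F (a + L) ≤ F (a + z) := hF (by linarith [hz.1])
      linarith
    have h2' : ∫ z in L..δ, (fbar * L) = (δ - L) * (fbar * L) := by
      rw [intervalIntegral.integral_const, smul_eq_mul]
    have hsplit : (∫ z in (0:ℝ)..L, (F (a + z) - F a)) + ∫ z in L..δ, (F (a + z) - F a)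
        = ∫ z in (0:ℝ)..δ, (F (a + z) - F a) :=
      intervalIntegral.integral_add_adjacent_intervals (hg_int 0 L) (hg_int L δ)
    have hbound : fbar * (L ^ 2 / 2) + (δ - L) * (fbar * L)
        ≤ ∫ z in (0:ℝ)..δ, (F (a + z) - F a) := by
      rw [← hsplit]; linarith [h1, h2, h2'.symm.le]
    nlinarith [mul_le_mul hc4 hm1 hm0 (by positivity : (0:ℝ) ≤ L * fbar / 4),
      mul_pos hL hfbar]

/-- Let `F : ℝ → ℝ` be nondecreasing and suppose `|F(a+z) − F(a)| ≥ f̲·|z|` for all `|z| ≤ L`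
(with `L, f̲ > 0`).  Then for every `δ`, the signed integral `∫_0^δ (F(a+z) − F(a)) dz` is at
least `c · min{|δ|, δ²}` with `c = min{f̲/2, L·f̲/4}`. -/
theorem integral_increment_lower_bound
    (F : ℝ → ℝ) (hF : Monotone F) (a L fbar : ℝ) (hL : 0 < L) (hfbar : 0 < fbar)
    (hgrowth : ∀ z : ℝ, |z| ≤ L → fbar * |z| ≤ |F (a + z) - F a|) (δ : ℝ) :
    min (fbar / 2) (L * fbar / 4) * min |δ| (δ ^ 2) ≤
      ∫ z in (0 : ℝ)..δ, (F (a + z) - F a) := by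
  rcases le_or_gt 0 δ with hδ | hδ
  · exact key_nonneg F hF a L fbar hL hfbar hgrowth δ hδ
  · -- reflect: H x = -F (-x), b = -a
    set H : ℝ → ℝ := fun x => -F (-x) with hH
    have hHmono : Monotone H := fun x y h => by
      simp only [hH, neg_le_neg_iff]
      exact hF (by linarith)
    have hHgrowth : ∀ z : ℝ, |z| ≤ L → fbar * |z| ≤ |H (-a + z) - H (-a)| := by
      intro z hz
      have := hgrowth (-z) (by rwa [abs_neg])
      rw [abs_neg] at this
      have heq : |H (-a + z) - H (-a)| = |F (a + -z) - F a| := by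
        simp only [hH, neg_add, neg_neg]
        rw [show -F (a + -z) - -F a = -(F (a + -z) - F a) by ring, abs_neg]
      rw [heq]
      exact this
    have key := key_nonneg H hHmono (-a) L fbar hL hfbar hHgrowth (-δ) (by linarith)
    have hint : ∫ z in (0:ℝ)..(-δ), (H (-a + z) - H (-a))
        = ∫ z in (0:ℝ)..δ, (F (a + z) - F a) := by
      have := intervalIntegral.integral_comp_neg (a := 0) (b := -δ)
        (fun z => F a - F (a + z))
      simp only [neg_neg, neg_zero] at this
      calc ∫ z in (0:ℝ)..(-δ), (H (-a + z) - H (-a))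
          = ∫ z in (0:ℝ)..(-δ), (F a - F (a + -z)) := by
            apply intervalIntegral.integral_congr
            intro z _
            simp only [hH, neg_add, neg_neg]
            ring_nf
        _ = ∫ z in δ..(0:ℝ), (F a - F (a + z)) := this
        _ = ∫ z in (0:ℝ)..δ, (F (a + z) - F a) := by
            rw [intervalIntegral.integral_symm]
            rw [← intervalIntegral.integral_neg]
            apply intervalIntegral.integral_congr
            intro z _; ring
    have heq2 : min |(-δ)| ((-δ) ^ 2) = min |δ| (δ ^ 2) := by
      rw [abs_neg, neg_pow]; ring_nf
    rw [← hint, ← heq2]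
    exact key
end

section
/- Let Y be a real-valued random variable with cumulative distribution function F(t) = P(Y ≤ t), let τ ∈ (0,1), and let a ∈ ℝ satisfy F(a) = τ. Suppose there exist L > 0 and f̲ > 0 such that |F(a + z) − F(a)| ≥ f̲·|z| for every z with |z| ≤ L. Then for every δ ∈ ℝ, E[ρ_τ(Y − a − δ) − ρ_τ(Y − a)] ≥ c · min{|δ|, δ²}, where c = min{f̲/2, L·f̲/4}. -/
/-!
Writing `ρ_τ(u) = τ·u + (-u)⁺` and `(t - y)⁺ - (s - y)⁺ = ∫_s^t 1{y ≤ x} dx`, Fubini gives Knight's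
identity `E[ρ_τ(Y - a - δ) - ρ_τ(Y - a)] = ∫_0^δ (F(a + x) - τ) dx`. Since `F(a) = τ`, the integrand
`g(x) = F(a + x) - F(a)` is monotone with `g(0) = 0`, so the growth condition reads `f̲·x ≤ g(x)` on
`[0, L]` (and symmetrically on `[-L, 0]`). Integrating, `∫_0^δ g ≥ f̲ δ²/2` for `δ ≤ L`, while for
`δ > L` monotonicity keeps `g ≥ f̲ L` on `[L, δ]` and the integral grows at least linearly in `δ`.
-/

open MeasureTheory

open Set

lemma checkLoss_eq_mul_add_posPart_neg (τ u : ℝ) : checkLoss τ u = τ * u + (-u)⁺ := by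
  show max _ _ = τ * u + max (-u) 0
  rw [max_comm (-u), ← max_add_add_left]
  congr 1 <;> ring

section CumulativeDistribution

variable {Ω : Type*} [MeasurableSpace Ω] {μ : Measure Ω} {Y : Ω → ℝ}

lemma monotone_measureReal_le [IsFiniteMeasure μ] (Y : Ω → ℝ) :
    Monotone fun x => μ.real {ω | Y ω ≤ x} :=
  fun _ _ hxy => measureReal_mono fun _ hω => le_trans hω hxy

lemma posPart_sub_sub_posPart_sub_eq_integral {s t : ℝ} (hst : s ≤ t) (y : ℝ) :
    (t - y)⁺ - (s - y)⁺ = ∫ x in Ioc s t, (Ici y).indicator 1 x := by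
  show max (t - y) 0 - max (s - y) 0 = _
  rw [integral_indicator_one measurableSet_Ici, measureReal_restrict_apply measurableSet_Ici,
    ← measureReal_congr ((Ioi_ae_eq_Ici (μ := volume)).inter (ae_eq_refl (Ioc s t))),
    inter_comm, Ioc_inter_Ioi, Real.volume_real_Ioc]
  rcases le_total y s with hys | hsy
  · rw [max_eq_left hys, max_eq_left (by linarith), max_eq_left (by linarith),
      max_eq_left (by linarith)]
    ring
  · rw [max_eq_right hsy, max_eq_right (a := s - y) (by linarith)]; simp

variable [IsFiniteMeasure μ]

lemma integrable_posPart_sub_sub_posPart_sub (hY : Measurable Y) (s t : ℝ) :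
    Integrable (fun ω => (t - Y ω)⁺ - (s - Y ω)⁺) μ :=
  Integrable.of_bound (by fun_prop) |t - s| <| ae_of_all _ fun ω => by
    simpa [posPart_def] using abs_max_sub_max_le_abs (t - Y ω) (s - Y ω) 0

lemma integral_posPart_sub_sub_posPart_sub_of_le (hY : Measurable Y) {s t : ℝ} (hst : s ≤ t) :
    ∫ ω, ((t - Y ω)⁺ - (s - Y ω)⁺) ∂μ = ∫ x in s..t, μ.real {ω | Y ω ≤ x} := by
  have hint : Integrable (fun p : Ω × ℝ => (Ici (Y p.1)).indicator (1 : ℝ → ℝ) p.2)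
      (μ.prod (volume.restrict (Ioc s t))) := by
    refine Integrable.of_bound ?_ 1 (ae_of_all _ fun p => ?_)
    · exact (measurable_const.indicator
        (measurableSet_le (hY.comp measurable_fst) measurable_snd)).aestronglyMeasurable
    · by_cases h : p.2 ∈ Ici (Y p.1) <;> simp [h]
  calc ∫ ω, ((t - Y ω)⁺ - (s - Y ω)⁺) ∂μ
      = ∫ ω, (∫ x in Ioc s t, (Ici (Y ω)).indicator 1 x) ∂μ := by
        simp_rw [posPart_sub_sub_posPart_sub_eq_integral hst]
    _ = ∫ x in Ioc s t, (∫ ω, {ω | Y ω ≤ x}.indicator 1 ω ∂μ) := integral_integral_swap hint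
    _ = ∫ x in s..t, μ.real {ω | Y ω ≤ x} := by
        rw [intervalIntegral.integral_of_le hst]
        congr with x
        exact integral_indicator_one (measurableSet_le hY measurable_const)

lemma integral_posPart_sub_sub_posPart_sub (hY : Measurable Y) (s t : ℝ) :
    ∫ ω, ((t - Y ω)⁺ - (s - Y ω)⁺) ∂μ = ∫ x in s..t, μ.real {ω | Y ω ≤ x} := by
  rcases le_total s t with hst | hts
  · exact integral_posPart_sub_sub_posPart_sub_of_le hY hst
  · rw [intervalIntegral.integral_symm, ← integral_posPart_sub_sub_posPart_sub_of_le hY hts,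
      ← integral_neg]
    simp

end CumulativeDistribution

lemma integral_checkLoss_sub_checkLoss {Ω : Type*} [MeasurableSpace Ω] (μ : Measure Ω)
    [IsProbabilityMeasure μ] {Y : Ω → ℝ} (hY : Measurable Y) (τ a δ : ℝ) :
    ∫ ω, (checkLoss τ (Y ω - a - δ) - checkLoss τ (Y ω - a)) ∂μ =
      ∫ x in (0 : ℝ)..δ, (μ.real {ω | Y ω ≤ a + x} - τ) := by
  have hpt : ∀ ω, checkLoss τ (Y ω - a - δ) - checkLoss τ (Y ω - a) =
      -(τ * δ) + ((a + δ - Y ω)⁺ - (a - Y ω)⁺) := fun ω => by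
    simp only [checkLoss_eq_mul_add_posPart_neg, neg_sub, sub_sub]
    ring
  have hcdf : IntervalIntegrable (fun x => μ.real {ω | Y ω ≤ a + x}) volume 0 δ :=
    ((monotone_measureReal_le Y).comp (monotone_id.const_add a)).intervalIntegrable
  simp_rw [hpt]
  rw [integral_add (integrable_const _) (integrable_posPart_sub_sub_posPart_sub hY _ _),
    integral_posPart_sub_sub_posPart_sub hY, intervalIntegral.integral_sub hcdf
      intervalIntegrable_const,
    intervalIntegral.integral_comp_add_left (fun x => μ.real {ω | Y ω ≤ x})]
  simp only [integral_const, probReal_univ, smul_eq_mul, intervalIntegral.integral_const,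
    add_zero, sub_zero]
  ring

section LinearGrowth

variable {g : ℝ → ℝ} {k L : ℝ}

lemma min_mul_min_le_integral_of_monotone (hg : Monotone g) (hk : 0 ≤ k) (hL : 0 ≤ L)
    (hgrowth : ∀ x ∈ Icc 0 L, k * x ≤ g x) {d : ℝ} (hd : 0 ≤ d) :
    min (k / 2) (L * k / 4) * min d (d ^ 2) ≤ ∫ x in (0 : ℝ)..d, g x := by
  have hquad : ∀ e ∈ Icc 0 L, k * (e ^ 2 / 2) ≤ ∫ x in (0 : ℝ)..e, g x := fun e he =>
    calc k * (e ^ 2 / 2) = ∫ x in (0 : ℝ)..e, k * x := by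
          rw [intervalIntegral.integral_const_mul, integral_id]; ring
      _ ≤ ∫ x in (0 : ℝ)..e, g x :=
        intervalIntegral.integral_mono_on he.1
          ((continuous_const.mul continuous_id).intervalIntegrable _ _) hg.intervalIntegrable
          fun x hx => hgrowth x ⟨hx.1, hx.2.trans he.2⟩
  rcases le_or_gt d L with hdL | hLd
  · calc min (k / 2) (L * k / 4) * min d (d ^ 2) ≤ k / 2 * d ^ 2 :=
          mul_le_mul (min_le_left _ _) (min_le_right _ _) (by positivity) (by positivity)
      _ = k * (d ^ 2 / 2) := by ring
      _ ≤ ∫ x in (0 : ℝ)..d, g x := hquad d ⟨hd, hdL⟩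
  · have hlin : (d - L) * (k * L) ≤ ∫ x in L..d, g x :=
      calc (d - L) * (k * L) = ∫ x in L..d, k * L := by
            rw [intervalIntegral.integral_const, smul_eq_mul]
        _ ≤ ∫ x in L..d, g x :=
          intervalIntegral.integral_mono_on hLd.le intervalIntegrable_const hg.intervalIntegrable
            fun x hx => (hgrowth L ⟨hL, le_rfl⟩).trans (hg hx.1)
    calc min (k / 2) (L * k / 4) * min d (d ^ 2) ≤ L * k / 4 * d :=
          mul_le_mul (min_le_right _ _) (min_le_left _ _) (by positivity) (by positivity)
      _ ≤ k * (L ^ 2 / 2) + (d - L) * (k * L) := by nlinarith [mul_nonneg hk hL]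
      _ ≤ (∫ x in (0 : ℝ)..L, g x) + ∫ x in L..d, g x :=
          add_le_add (hquad L ⟨hL, le_rfl⟩) hlin
      _ = ∫ x in (0 : ℝ)..d, g x :=
          intervalIntegral.integral_add_adjacent_intervals hg.intervalIntegrable
            hg.intervalIntegrable

lemma min_mul_min_abs_le_integral_of_monotone (hg : Monotone g) (hg0 : g 0 = 0) (hk : 0 ≤ k)
    (hL : 0 ≤ L) (hgrowth : ∀ z, |z| ≤ L → k * |z| ≤ |g z|) (δ : ℝ) :
    min (k / 2) (L * k / 4) * min |δ| (δ ^ 2) ≤ ∫ x in (0 : ℝ)..δ, g x := by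
  rcases le_total 0 δ with hδ | hδ
  · rw [abs_of_nonneg hδ]
    refine min_mul_min_le_integral_of_monotone hg hk hL (fun x hx => ?_) hδ
    have := hgrowth x (by rw [abs_of_nonneg hx.1]; exact hx.2)
    rwa [abs_of_nonneg hx.1, abs_of_nonneg (hg0 ▸ hg hx.1)] at this
  · have hreflect : ∫ x in (0 : ℝ)..-δ, -g (-x) = ∫ x in (0 : ℝ)..δ, g x := by
      rw [intervalIntegral.integral_neg, intervalIntegral.integral_comp_neg g,
        intervalIntegral.integral_symm]
      simp
    rw [abs_of_nonpos hδ, ← neg_sq, ← hreflect]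
    refine min_mul_min_le_integral_of_monotone (fun x y h => neg_le_neg (hg (neg_le_neg h)))
      hk hL (fun x hx => ?_) (neg_nonneg.2 hδ)
    have := hgrowth (-x) (by rw [abs_neg, abs_of_nonneg hx.1]; exact hx.2)
    rwa [abs_neg, abs_of_nonneg hx.1, abs_of_nonpos (hg0 ▸ hg (neg_nonpos.2 hx.1))] at this

end LinearGrowth

theorem expectation_checkLoss_increment_lower_bound_general
    {Ω : Type*} [MeasurableSpace Ω] (μ : Measure Ω) [IsProbabilityMeasure μ]
    (Y : Ω → ℝ) (hY : Measurable Y)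
    (F : ℝ → ℝ) (hF : ∀ t, F t = (μ {ω | Y ω ≤ t}).toReal)
    (τ : ℝ) (a : ℝ) (ha : F a = τ)
    (L fbar : ℝ) (hL : 0 < L) (hfbar : 0 < fbar)
    (hgrowth : ∀ z : ℝ, |z| ≤ L → fbar * |z| ≤ |F (a + z) - F a|) (δ : ℝ) :
    min (fbar / 2) (L * fbar / 4) * min |δ| (δ ^ 2) ≤
      ∫ ω, (checkLoss τ (Y ω - a - δ) - checkLoss τ (Y ω - a)) ∂μ := by
  obtain rfl : F = fun t => μ.real {ω | Y ω ≤ t} := funext hF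
  subst ha
  rw [integral_checkLoss_sub_checkLoss μ hY]
  refine min_mul_min_abs_le_integral_of_monotone
    (g := fun x => μ.real {ω | Y ω ≤ a + x} - μ.real {ω | Y ω ≤ a}) ?_ (by simp) hfbar.le hL.le hgrowth δ
  exact fun x y hxy => sub_le_sub_right (monotone_measureReal_le Y (by simpa using hxy)) _

/-- Let `Y` be a real random variable with CDF `F`, `τ ∈ (0,1)`, and `a` a `τ`-quantile
(`F a = τ`).  If `|F(a+z) − F(a)| ≥ f̲·|z|` for all `|z| ≤ L` (with `L, f̲ > 0`), then for
every `δ`, `E[ρ_τ(Y − a − δ) − ρ_τ(Y − a)] ≥ c · min{|δ|, δ²}` with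
`c = min{f̲/2, L·f̲/4}`. -/
theorem expectation_checkLoss_increment_lower_bound
    {Ω : Type*} [MeasurableSpace Ω] (μ : Measure Ω) [IsProbabilityMeasure μ]
    (Y : Ω → ℝ) (hY : Measurable Y)
    (F : ℝ → ℝ) (hF : ∀ t, F t = (μ {ω | Y ω ≤ t}).toReal)
    (τ : ℝ) (hτ : τ ∈ Set.Ioo (0 : ℝ) 1) (a : ℝ) (ha : F a = τ)
    (L fbar : ℝ) (hL : 0 < L) (hfbar : 0 < fbar)
    (hgrowth : ∀ z : ℝ, |z| ≤ L → fbar * |z| ≤ |F (a + z) - F a|) (δ : ℝ) :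
    min (fbar / 2) (L * fbar / 4) * min |δ| (δ ^ 2) ≤
      ∫ ω, (checkLoss τ (Y ω - a - δ) - checkLoss τ (Y ω - a)) ∂μ :=
  expectation_checkLoss_increment_lower_bound_general μ Y hY F hF τ a ha L fbar hL hfbar hgrowth δ
end

section
/- Let δ, q ∈ ℝ^n, let t, γ ≥ 0, and suppose ∑_{i=1}^n min{|δ_i|, δ_i²} ≤ t² and |q_i − δ_i| ≤ γ for all i ∈ {1,…,n}. Then ∑_{i=1}^n min{|q_i|, q_i²} ≤ 3t² + γ·t² + 2n·γ². -/
open Finset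

/-- If `Δ²(δ) ≤ t²` and `q` is uniformly `γ`-close to `δ`, then
`Δ²(q) ≤ 3t² + γ·t² + 2n·γ²`, where `Δ²(v) = ∑ᵢ min{|vᵢ|, vᵢ²}`. -/
theorem huber_perturbation_bound (n : ℕ) (δ q : Fin n → ℝ) (t γ : ℝ)
    (ht : 0 ≤ t) (hγ : 0 ≤ γ)
    (hδ : ∑ i, min |δ i| ((δ i) ^ 2) ≤ t ^ 2)
    (hclose : ∀ i, |q i - δ i| ≤ γ) :
    ∑ i, min |q i| ((q i) ^ 2) ≤ 3 * t ^ 2 + γ * t ^ 2 + 2 * n * γ ^ 2 := by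
  have key : ∀ i, min |q i| ((q i) ^ 2) ≤ (3 + γ) * min |δ i| ((δ i) ^ 2) + 2 * γ ^ 2 := by
    intro i
    have h := abs_le.mp (hclose i)
    have hsq : (q i - δ i) ^ 2 ≤ γ ^ 2 := by
      have := sq_abs (q i - δ i)
      nlinarith [hclose i, abs_nonneg (q i - δ i)]
    rcases le_total |δ i| 1 with hc | hc
    · -- min |δ| δ² = δ²
      have hm : min |δ i| ((δ i) ^ 2) = (δ i) ^ 2 := by
        rw [min_eq_right]
        calc (δ i) ^ 2 = |δ i| * |δ i| := by rw [← sq_abs]; ring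
          _ ≤ 1 * |δ i| := by
            apply mul_le_mul_of_nonneg_right hc (abs_nonneg _)
          _ = |δ i| := one_mul _
      rw [hm]
      have h1 : min |q i| ((q i) ^ 2) ≤ (q i) ^ 2 := min_le_right _ _
      nlinarith [sq_nonneg (2 * δ i - q i), mul_nonneg hγ (sq_nonneg (δ i))]
    · -- min |δ| δ² = |δ|
      have hm : min |δ i| ((δ i) ^ 2) = |δ i| := by
        rw [min_eq_left]
        calc |δ i| = 1 * |δ i| := (one_mul _).symm
          _ ≤ |δ i| * |δ i| := by
            apply mul_le_mul_of_nonneg_right hc (abs_nonneg _)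
          _ = (δ i) ^ 2 := by rw [← sq_abs]; ring
      rw [hm]
      have h1 : min |q i| ((q i) ^ 2) ≤ |q i| := min_le_left _ _
      have h2 : |q i| ≤ |δ i| + γ := by
        calc |q i| = |δ i + (q i - δ i)| := by ring_nf
          _ ≤ |δ i| + |q i - δ i| := abs_add_le _ _
          _ ≤ |δ i| + γ := by linarith [hclose i]
      nlinarith [sq_nonneg γ, abs_nonneg (δ i)]
  calc ∑ i, min |q i| ((q i) ^ 2)
      ≤ ∑ i, ((3 + γ) * min |δ i| ((δ i) ^ 2) + 2 * γ ^ 2) := Finset.sum_le_sum fun i _ => key i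
    _ = (3 + γ) * ∑ i, min |δ i| ((δ i) ^ 2) + n * (2 * γ ^ 2) := by
        rw [Finset.sum_add_distrib, ← Finset.mul_sum, Finset.sum_const, card_univ,
          Fintype.card_fin, nsmul_eq_mul]
    _ ≤ 3 * t ^ 2 + γ * t ^ 2 + 2 * n * γ ^ 2 := by nlinarith [Nat.cast_nonneg (α := ℝ) n]
end

section
/- Let S ⊆ ℝ^n be a convex set, let f*, f̂ ∈ S, let t > 0, and let M, M̂ : S → ℝ be functions such that: (i) M̂ is convex on S; (ii) M̂(f̂) ≤ M̂(f*) ≤ 0; (iii) M(f*) = 0; (iv) the map u ↦ M((1−u)·f* + u·f̂) is continuous on [0,1]; and (v) M(f̂) > t². Then there exists f̃ ∈ S with M(f̃) = t² and M̂(f̃) ≤ 0; consequently, sup_{f ∈ S : M(f) ≤ t²} (M(f) − M̂(f)) ≥ t². -/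
/-- The deterministic convexity/intermediate-value argument of Proposition 1: let
`S ⊆ ℝⁿ` be convex, `f*, f̂ ∈ S`, `t > 0`, `M̂` convex on `S` with
`M̂(f̂) ≤ M̂(f*) ≤ 0`, `M(f*) = 0`, `u ↦ M((1−u)f* + u f̂)` continuous on `[0,1]`, and
`M(f̂) > t²`.  Then there is `f̃ ∈ S` with `M(f̃) = t²` and `M̂(f̃) ≤ 0`; consequently the
localized empirical process `sup_{f ∈ S, M(f) ≤ t²} (M(f) − M̂(f))` is at least `t²`. -/
theorem convexity_localization (n : ℕ) (S : Set (Fin n → ℝ)) (hS : Convex ℝ S)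
    (fstar fhat : Fin n → ℝ) (hfstar : fstar ∈ S) (hfhat : fhat ∈ S)
    (t : ℝ) (ht : 0 < t)
    (M Mhat : (Fin n → ℝ) → ℝ)
    (hconv : ConvexOn ℝ S Mhat)
    (hbasic : Mhat fhat ≤ Mhat fstar) (hstar : Mhat fstar ≤ 0)
    (hMstar : M fstar = 0)
    (hcont : ContinuousOn (fun u : ℝ => M ((1 - u) • fstar + u • fhat)) (Set.Icc 0 1))
    (hlarge : t ^ 2 < M fhat) :
    ∃ ftilde ∈ S, M ftilde = t ^ 2 ∧ Mhat ftilde ≤ 0 ∧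
      t ^ 2 ≤ M ftilde - Mhat ftilde := by
  have h01 : (0:ℝ) ≤ 1 := zero_le_one
  have hsub := intermediate_value_Icc h01 hcont
  have h0 : (fun u : ℝ => M ((1 - u) • fstar + u • fhat)) 0 = 0 := by
    simp [hMstar]
  have h1 : (fun u : ℝ => M ((1 - u) • fstar + u • fhat)) 1 = M fhat := by
    simp
  have hmem : t ^ 2 ∈ Set.Icc ((fun u : ℝ => M ((1 - u) • fstar + u • fhat)) 0)
      ((fun u : ℝ => M ((1 - u) • fstar + u • fhat)) 1) := by
    rw [h0, h1]
    exact ⟨le_of_lt (by positivity), hlarge.le⟩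
  obtain ⟨u, hu, hMu⟩ := hsub hmem
  have hu0 : (0:ℝ) ≤ 1 - u := by linarith [hu.2]
  have hcvx := hconv.2 hfstar hfhat hu0 hu.1 (by ring)
  refine ⟨(1 - u) • fstar + u • fhat, hS hfstar hfhat hu0 hu.1 (by ring), hMu, ?_, ?_⟩
  · simp only [smul_eq_mul] at hcvx
    nlinarith [hu.1, hu.2]
  · simp only [smul_eq_mul] at hcvx
    have : M ((1 - u) • fstar + u • fhat) = t ^ 2 := hMu
    nlinarith [hu.1, hu.2]
end

section
/- Let ξ_1, …, ξ_n be i.i.d. Rademacher random variables (taking values +1 and −1 each with probability 1/2), let T ⊆ ℝ^n be a nonempty finite set, and for each i ∈ {1,…,n} let φ_i : ℝ → ℝ be 1-Lipschitz with φ_i(0) = 0. Then E[ max_{t ∈ T} ∑_{i=1}^n ξ_i·φ_i(t_i) ] ≤ E[ max_{t ∈ T} ∑_{i=1}^n ξ_i·t_i ]. -/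
/-!
Fix all signs but the `k`-th. The two values of `ξ_k` give
`sup_t (A t + f t) + sup_t (A t - f t)`, and this can only grow when `f` is replaced by any `g`
with `f t - f s ≤ |g t - g s|`: evaluate the right side at the maximisers `t, s` of the two
suprema on the left, in the order given by the sign of `g t - g s`. Replacing the `φ_i` by the
identity one coordinate at a time thus increases the average over all sign patterns, and this
average is the expectation, since `(ξ_i)` is a.e. uniformly distributed on `{±1}ⁿ`.
-/

open MeasureTheory ProbabilityTheory Finset Function

def boolSign : Bool → ℝ
  | true => 1
  | false => -1

@[simp] lemma boolSign_true : boolSign true = 1 := rfl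
@[simp] lemma boolSign_false : boolSign false = -1 := rfl

lemma boolSign_injective : Injective boolSign := by
  intro a b h
  cases a <;> cases b <;> first | rfl | norm_num at h

theorem Finset.sup'_add_add_sup'_sub_le {α : Type*} (T : Finset α) (hT : T.Nonempty)
    (A f g : α → ℝ) (h : ∀ t ∈ T, ∀ s ∈ T, f t - f s ≤ |g t - g s|) :
    (T.sup' hT fun t => A t + f t) + (T.sup' hT fun t => A t - f t)
      ≤ (T.sup' hT fun t => A t + g t) + (T.sup' hT fun t => A t - g t) := by
  obtain ⟨t, ht, hft⟩ := T.exists_mem_eq_sup' hT fun t => A t + f t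
  obtain ⟨s, hs, hfs⟩ := T.exists_mem_eq_sup' hT fun t => A t - f t
  have hg : |g t - g s| ≤ (T.sup' hT fun t => A t + g t) + (T.sup' hT fun t => A t - g t)
      - (A t + A s) :=
    abs_sub_le_iff.mpr
      ⟨by linarith [le_sup' (fun t => A t + g t) ht, le_sup' (fun t => A t - g t) hs],
       by linarith [le_sup' (fun t => A t + g t) hs, le_sup' (fun t => A t - g t) ht]⟩
  linarith [h t ht s hs]

theorem two_nsmul_sum_eq_sum_update {ι M : Type*} [Fintype ι] [DecidableEq ι] [AddCommMonoid M]
    (F : (ι → Bool) → M) (k : ι) :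
    2 • ∑ ε, F ε = ∑ ε, (F (update ε k true) + F (update ε k false)) := by
  have hflip : Involutive fun ε : ι → Bool => update ε k (!ε k) := fun ε => by simp
  rw [two_nsmul]
  nth_rewrite 2 [← Equiv.sum_comp hflip.toPerm F]
  rw [← sum_add_distrib]
  refine sum_congr rfl fun ε _ => ?_
  cases h : ε k <;> simp only [Involutive.coe_toPerm, h, Bool.not_false, Bool.not_true] <;>
    rw [← h, update_eq_self, add_comm]

section Comparison

variable {ι : Type*} [Fintype ι] [DecidableEq ι] (T : Finset (ι → ℝ)) (hT : T.Nonempty)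

def rademacherSup (g : ι → ℝ → ℝ) (ε : ι → Bool) : ℝ :=
  T.sup' hT fun t => ∑ i, boolSign (ε i) * g i (t i)

theorem sum_boolSign_update_mul_update (ε : ι → Bool) (g : ι → ℝ → ℝ) (k : ι) (b : Bool)
    (h : ℝ → ℝ) (t : ι → ℝ) :
    ∑ i, boolSign (update ε k b i) * update g k h i (t i)
      = ∑ i ∈ univ.erase k, boolSign (ε i) * g i (t i) + boolSign b * h (t k) := by
  rw [← add_sum_erase _ _ (mem_univ k), update_self, update_self, add_comm]
  congr 1
  refine sum_congr rfl fun i hi => ?_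
  rw [update_of_ne (ne_of_mem_erase hi), update_of_ne (ne_of_mem_erase hi)]

theorem sum_rademacherSup_le_update (g : ι → ℝ → ℝ) (k : ι) (h : ℝ → ℝ)
    (hk : ∀ x y, g k x - g k y ≤ |h x - h y|) :
    ∑ ε, rademacherSup T hT g ε ≤ ∑ ε, rademacherSup T hT (update g k h) ε := by
  have hpair : ∀ ε : ι → Bool,
      rademacherSup T hT g (update ε k true) + rademacherSup T hT g (update ε k false)
        ≤ rademacherSup T hT (update g k h) (update ε k true)
          + rademacherSup T hT (update g k h) (update ε k false) := by
    intro ε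
    conv_lhs => rw [← update_eq_self k g]
    simpa only [rademacherSup, sum_boolSign_update_mul_update, boolSign_true, boolSign_false,
      one_mul, neg_one_mul, ← sub_eq_add_neg] using
      T.sup'_add_add_sup'_sub_le hT (fun t => ∑ i ∈ univ.erase k, boolSign (ε i) * g i (t i))
        (fun t => g k (t k)) (fun t => h (t k)) fun t _ s _ => hk (t k) (s k)
  have hsum := sum_le_sum fun ε (_ : ε ∈ univ) => hpair ε
  rw [← two_nsmul_sum_eq_sum_update, ← two_nsmul_sum_eq_sum_update, two_nsmul, two_nsmul] at hsum
  linarith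

theorem sum_rademacherSup_le (g g' : ι → ℝ → ℝ)
    (h : ∀ i x y, g i x - g i y ≤ |g' i x - g' i y|) :
    ∑ ε, rademacherSup T hT g ε ≤ ∑ ε, rademacherSup T hT g' ε := by
  suffices ∀ s : Finset ι,
      ∑ ε, rademacherSup T hT g ε ≤ ∑ ε, rademacherSup T hT (s.piecewise g' g) ε by
    simpa using this univ
  intro s
  induction s using Finset.induction_on with
  | empty => simp
  | insert a s ha ih =>
    rw [piecewise_insert]
    refine ih.trans (sum_rademacherSup_le_update T hT _ a _ ?_)
    simpa only [piecewise_eq_of_notMem _ _ _ ha] using h a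

end Comparison

section Integral

variable {Ω : Type*} [MeasurableSpace Ω] {μ : Measure Ω}

theorem integral_comp_eq_sum_of_ae_mem_range [IsFiniteMeasure μ] {K β : Type*} [Fintype K]
    [MeasurableSpace β] [MeasurableSingletonClass β] {X : Ω → β} (hX : Measurable X)
    {e : K → β} (he : Injective e) (hXe : ∀ᵐ ω ∂μ, X ω ∈ Set.range e) (v : β → ℝ) :
    ∫ ω, v (X ω) ∂μ = ∑ k, μ.real (X ⁻¹' {e k}) * v (e k) := by
  have hmeas : ∀ k, MeasurableSet (X ⁻¹' {e k}) := fun k => hX (measurableSet_singleton _)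
  have hae : (fun ω => v (X ω))
      =ᵐ[μ] fun ω => ∑ k, (X ⁻¹' {e k}).indicator (fun _ => v (e k)) ω := by
    filter_upwards [hXe] with ω ⟨k₀, hk₀⟩
    have hoff : ∀ k ∈ univ, k ≠ k₀ → (X ⁻¹' {e k}).indicator (fun _ => v (e k)) ω = 0 :=
      fun k _ hk => Set.indicator_of_notMem (fun hω => he.ne hk (hω.symm.trans hk₀.symm)) _
    rw [sum_eq_single_of_mem k₀ (mem_univ _) hoff,
      Set.indicator_of_mem (show ω ∈ X ⁻¹' {e k₀} from hk₀.symm), hk₀]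
  rw [integral_congr_ae hae,
    integral_finsetSum _ fun k _ => (integrable_const _).indicator (hmeas k)]
  simp only [integral_indicator_const _ (hmeas _), smul_eq_mul]

theorem ae_eq_one_or_eq_neg_one [IsProbabilityMeasure μ] {X : Ω → ℝ} (hX : Measurable X)
    (h1 : μ {ω | X ω = 1} = 1 / 2) (h2 : μ {ω | X ω = -1} = 1 / 2) :
    ∀ᵐ ω ∂μ, X ω = 1 ∨ X ω = -1 := by
  have hdisj : Disjoint {ω | X ω = 1} {ω | X ω = -1} :=
    Set.disjoint_left.mpr fun ω (h : X ω = 1) (h' : X ω = -1) => by norm_num [h] at h'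
  have hmeas : ∀ c : ℝ, MeasurableSet {ω | X ω = c} := fun c => hX (measurableSet_singleton c)
  change ∀ᵐ ω ∂μ, ω ∈ {ω | X ω = 1} ∪ {ω | X ω = -1}
  rw [ae_mem_iff_measure_eq ((hmeas 1).union (hmeas (-1))).nullMeasurableSet,
    measure_union hdisj (hmeas (-1)), h1, h2, measure_univ, ENNReal.add_halves]

variable {ι : Type*} [Fintype ι] {ξ : ι → Ω → ℝ}

theorem measure_preimage_boolSign (hξindep : iIndepFun ξ μ)
    (hξdist : ∀ i, μ {ω | ξ i ω = 1} = 1 / 2 ∧ μ {ω | ξ i ω = -1} = 1 / 2) (ε : ι → Bool) :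
    μ ((fun ω i => ξ i ω) ⁻¹' {fun i => boolSign (ε i)}) = (1 / 2) ^ Fintype.card ι := by
  have hpre : (fun ω i => ξ i ω) ⁻¹' {fun i => boolSign (ε i)}
      = ⋂ i, ξ i ⁻¹' {boolSign (ε i)} := by
    ext ω
    simp [funext_iff]
  have hfactor : ∀ i, μ (ξ i ⁻¹' {boolSign (ε i)}) = 1 / 2 := fun i => by
    cases ε i
    exacts [(hξdist i).2, (hξdist i).1]
  rw [hpre, hξindep.meas_iInter fun i => ⟨{boolSign (ε i)}, measurableSet_singleton _, rfl⟩]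
  simp only [hfactor, prod_const, card_univ]

theorem integral_rademacher_eq_average [DecidableEq ι] [IsProbabilityMeasure μ]
    (hξmeas : ∀ i, Measurable (ξ i)) (hξindep : iIndepFun ξ μ)
    (hξdist : ∀ i, μ {ω | ξ i ω = 1} = 1 / 2 ∧ μ {ω | ξ i ω = -1} = 1 / 2) (v : (ι → ℝ) → ℝ) :
    ∫ ω, v (fun i => ξ i ω) ∂μ
      = (1 / 2) ^ Fintype.card ι * ∑ ε : ι → Bool, v (fun i => boolSign (ε i)) := by
  have hsigns :
      ∀ᵐ ω ∂μ, (fun i => ξ i ω) ∈ Set.range fun (ε : ι → Bool) i => boolSign (ε i) := by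
    filter_upwards [ae_all_iff.mpr fun i =>
      ae_eq_one_or_eq_neg_one (hξmeas i) (hξdist i).1 (hξdist i).2] with ω hω
    choose ε hε using fun i =>
      show ∃ b, boolSign b = ξ i ω from (hω i).elim (⟨true, ·.symm⟩) (⟨false, ·.symm⟩)
    exact ⟨ε, funext hε⟩
  rw [integral_comp_eq_sum_of_ae_mem_range (X := fun ω i => ξ i ω)
    (e := fun (ε : ι → Bool) i => boolSign (ε i)) (measurable_pi_lambda _ hξmeas)
    boolSign_injective.comp_left hsigns, mul_sum]
  refine sum_congr rfl fun ε _ => ?_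
  rw [measureReal_def, measure_preimage_boolSign hξindep hξdist, ENNReal.toReal_pow]
  norm_num

end Integral

theorem rademacher_contraction_general
    {Ω : Type*} [MeasurableSpace Ω] (μ : Measure Ω) [IsProbabilityMeasure μ]
    (n : ℕ) (ξ : Fin n → Ω → ℝ)
    (hξmeas : ∀ i, Measurable (ξ i))
    (hξindep : iIndepFun ξ μ)
    (hξdist : ∀ i, μ {ω | ξ i ω = 1} = 1 / 2 ∧ μ {ω | ξ i ω = -1} = 1 / 2)
    (T : Finset (Fin n → ℝ)) (hT : T.Nonempty)
    (φ : Fin n → ℝ → ℝ)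
    (hφlip : ∀ i, LipschitzWith 1 (φ i)) :
    ∫ ω, (T.sup' hT fun t => ∑ i, ξ i ω * φ i (t i)) ∂μ ≤
      ∫ ω, (T.sup' hT fun t => ∑ i, ξ i ω * t i) ∂μ := by
  have hcontr : ∀ i x y, φ i x - φ i y ≤ |x - y| := fun i x y =>
    (le_abs_self _).trans (by simpa [Real.dist_eq] using (hφlip i).dist_le_mul x y)
  rw [integral_rademacher_eq_average hξmeas hξindep hξdist
      (fun x => T.sup' hT fun t => ∑ i, x i * φ i (t i)),
    integral_rademacher_eq_average hξmeas hξindep hξdist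
      (fun x => T.sup' hT fun t => ∑ i, x i * t i)]
  exact mul_le_mul_of_nonneg_left (sum_rademacherSup_le T hT φ (fun _ x => x) hcontr)
    (by positivity)

/-- Rademacher contraction principle: if `ξ₁,…,ξₙ` are i.i.d. Rademacher signs,
`T ⊆ ℝⁿ` is finite and nonempty, and each `φᵢ` is 1-Lipschitz with `φᵢ(0) = 0`, then
`E[max_{t ∈ T} ∑ᵢ ξᵢ·φᵢ(tᵢ)] ≤ E[max_{t ∈ T} ∑ᵢ ξᵢ·tᵢ]`. -/
theorem rademacher_contraction
    {Ω : Type*} [MeasurableSpace Ω] (μ : Measure Ω) [IsProbabilityMeasure μ]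
    (n : ℕ) (ξ : Fin n → Ω → ℝ)
    (hξmeas : ∀ i, Measurable (ξ i))
    (hξindep : iIndepFun ξ μ)
    (hξdist : ∀ i, μ {ω | ξ i ω = 1} = 1 / 2 ∧ μ {ω | ξ i ω = -1} = 1 / 2)
    (T : Finset (Fin n → ℝ)) (hT : T.Nonempty)
    (φ : Fin n → ℝ → ℝ)
    (hφlip : ∀ i, LipschitzWith 1 (φ i)) (hφ0 : ∀ i, φ i 0 = 0) :
    ∫ ω, (T.sup' hT fun t => ∑ i, ξ i ω * φ i (t i)) ∂μ ≤
      ∫ ω, (T.sup' hT fun t => ∑ i, ξ i ω * t i) ∂μ :=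
  rademacher_contraction_general μ n ξ hξmeas hξindep hξdist T hT φ hφlip
end

section
/- For every integer r ≥ 1 and every constant c₀ > 0 there exist a constant C > 0 and an integer N such that the following holds for all n ≥ N: if 0 ≤ x_1 < x_2 < ⋯ < x_n ≤ 1 satisfy x_1 ≤ c₀·(log n)/n, x_i − x_{i−1} ≤ c₀·(log n)/n for all i ∈ {2,…,n}, and 1 − x_n ≤ c₀·(log n)/n, then every real polynomial g of degree at most r−1 with ∑_{i=1}^n g(x_i)² = 1 satisfies max_{1≤i≤n} |g(x_i)| ≤ C·(log n)/√n. -/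
open Finset Polynomial


lemma my_derivative_prod {ι : Type*} [DecidableEq ι] (s : Finset ι) (f : ι → Polynomial ℝ) :
    Polynomial.derivative (∏ i ∈ s, f i) =
      ∑ i ∈ s, (∏ j ∈ s.erase i, f j) * Polynomial.derivative (f i) := by
  induction s using Finset.induction_on with
  | empty => simp
  | @insert a s ha ih =>
    rw [Finset.prod_insert ha, derivative_mul, ih, Finset.sum_insert ha,
      Finset.erase_insert ha, Finset.mul_sum, mul_comm (derivative (f a))]
    congr 1
    refine Finset.sum_congr rfl fun i hi => ?_
    rw [Finset.erase_insert_of_ne (by rintro rfl; exact ha hi),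
      Finset.prod_insert (fun h => ha (Finset.mem_of_mem_erase h))]
    ring

lemma exists_near (n : ℕ) (hn : 1 ≤ n) (x : ℕ → ℝ) (w : ℝ)
    (h0 : 0 ≤ x 1) (hmono : ∀ i j, 1 ≤ i → i < j → j ≤ n → x i < x j) (_hxn : x n ≤ 1)
    (h1 : x 1 ≤ w) (hgap : ∀ i, 2 ≤ i → i ≤ n → x i - x (i-1) ≤ w) (hend : 1 - x n ≤ w)
    (y : ℝ) (hy0 : 0 ≤ y) (hy1 : y ≤ 1) :
    ∃ i, 1 ≤ i ∧ i ≤ n ∧ |x i - y| ≤ w := by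
  classical
  by_cases h : ∃ i ∈ Finset.Icc 1 n, x i ≤ y
  · set S := (Finset.Icc 1 n).filter (fun i => x i ≤ y) with hS
    have hSne : S.Nonempty := by
      obtain ⟨i, hi, hxi⟩ := h
      exact ⟨i, Finset.mem_filter.mpr ⟨hi, hxi⟩⟩
    set i := S.max' hSne with hidef
    have hiS : i ∈ S := S.max'_mem hSne
    obtain ⟨hiIcc, hxiy⟩ := Finset.mem_filter.mp hiS
    rw [Finset.mem_Icc] at hiIcc
    refine ⟨i, hiIcc.1, hiIcc.2, ?_⟩
    rcases eq_or_lt_of_le hiIcc.2 with he | hlt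
    · rw [abs_sub_comm, abs_of_nonneg (by linarith)]
      rw [he]; linarith
    · have hnotS : i + 1 ∉ S := fun hmem => by
        have := S.le_max' _ hmem
        omega
      have hx1y : y < x (i + 1) := by
        by_contra hc
        exact hnotS (Finset.mem_filter.mpr ⟨Finset.mem_Icc.mpr ⟨by omega, by omega⟩, le_of_not_gt hc⟩)
      have hgapi := hgap (i + 1) (by omega) (by omega)
      simp only [Nat.add_sub_cancel] at hgapi
      rw [abs_sub_comm, abs_of_nonneg (by linarith)]
      linarith
  · push_neg at h
    have h1' := h 1 (Finset.mem_Icc.mpr ⟨le_refl 1, hn⟩)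
    refine ⟨1, le_refl 1, hn, ?_⟩
    rw [abs_of_nonneg (by linarith)]
    linarith

lemma deriv_bound (r : ℕ) (hr : 1 ≤ r) (v : Fin r → ℝ)
    (hv01 : ∀ j, v j ∈ Set.Icc (0:ℝ) 1)
    (hsep : ∀ j k : Fin r, j ≠ k → 1/(2*r) ≤ |v j - v k|)
    (g : Polynomial ℝ) (hdeg : g.natDegree ≤ r - 1)
    (M : ℝ) (hM : ∀ j, |g.eval (v j)| ≤ M)
    (ξ : ℝ) (hξ : ξ ∈ Set.Icc (0:ℝ) 1) :
    |g.derivative.eval ξ| ≤ ((r:ℝ)^2 * (2*r)^(r+1)) * M := by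
  classical
  have hr0 : (0:ℝ) < r := by exact_mod_cast hr
  have hr1 : (1:ℝ) ≤ r := by exact_mod_cast hr
  have h2r : (1:ℝ) ≤ 2*r := by linarith
  have h2r0 : (0:ℝ) < 2*r := by linarith
  have hM0 : 0 ≤ M := le_trans (abs_nonneg _) (hM ⟨0, hr⟩)
  -- injectivity of nodes
  have hvne : ∀ j k : Fin r, j ≠ k → v j ≠ v k := by
    intro j k hjk heq
    have := hsep j k hjk
    rw [heq, sub_self, abs_zero] at this
    have : (0:ℝ) < 1/(2*r) := by positivity
    linarith
  have hinj : Set.InjOn v ↑(Finset.univ : Finset (Fin r)) := by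
    intro j _ k _ h
    by_contra hne
    exact hvne j k hne h
  have hdlt : g.degree < (#(Finset.univ : Finset (Fin r)) : WithBot ℕ) := by
    apply lt_of_le_of_lt g.degree_le_natDegree
    rw [Finset.card_univ, Fintype.card_fin]
    exact_mod_cast Nat.lt_of_le_of_lt hdeg (by omega)
  have hrep := Lagrange.eq_interpolate hinj hdlt
  -- bound on inverse separations
  have hinv : ∀ j k : Fin r, j ≠ k → |(v j - v k)⁻¹| ≤ 2*r := by
    intro j k hjk
    rw [abs_inv]
    have h1 : (2*(r:ℝ))⁻¹ ≤ |v j - v k| := by rw [← one_div]; exact hsep j k hjk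
    calc |v j - v k|⁻¹ ≤ ((2*(r:ℝ))⁻¹)⁻¹ := inv_anti₀ (by positivity) h1
      _ = 2*(r:ℝ) := inv_inv _
  -- eval bound on basis divisors
  have hbd : ∀ j k : Fin r, j ≠ k → |(Lagrange.basisDivisor (v j) (v k)).eval ξ| ≤ 2*r := by
    intro j k hjk
    rw [Lagrange.basisDivisor, eval_mul, eval_C, eval_sub, eval_X, eval_C, abs_mul]
    have h1 : |ξ - v k| ≤ 1 := by
      have h2 := hv01 k
      obtain ⟨ha, hb⟩ := hξ
      obtain ⟨hc, hd⟩ := h2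
      rw [abs_le]; constructor <;> linarith
    calc |(v j - v k)⁻¹| * |ξ - v k| ≤ (2*r) * 1 :=
          mul_le_mul (hinv j k hjk) h1 (abs_nonneg _) (by linarith)
      _ = 2*r := mul_one _
  -- derivative of basis divisor
  have hbdd : ∀ j k : Fin r, Polynomial.derivative (Lagrange.basisDivisor (v j) (v k))
      = C ((v j - v k)⁻¹) := by
    intro j k
    rw [Lagrange.basisDivisor, derivative_C_mul, derivative_sub, derivative_X, derivative_C,
      sub_zero, mul_one]
  -- bound on derivative of basis polynomial
  have hB : ∀ j : Fin r, |(Polynomial.derivative (Lagrange.basis Finset.univ v j)).eval ξ|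
      ≤ (r:ℝ) * (2*r)^(r+1) := by
    intro j
    rw [Lagrange.basis, my_derivative_prod]
    rw [eval_finset_sum]
    calc |∑ b ∈ (Finset.univ.erase j), ((∏ a ∈ (Finset.univ.erase j).erase b,
            Lagrange.basisDivisor (v j) (v a)) *
            Polynomial.derivative (Lagrange.basisDivisor (v j) (v b))).eval ξ|
        ≤ ∑ b ∈ (Finset.univ.erase j), |((∏ a ∈ (Finset.univ.erase j).erase b,
            Lagrange.basisDivisor (v j) (v a)) *
            Polynomial.derivative (Lagrange.basisDivisor (v j) (v b))).eval ξ| :=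
          Finset.abs_sum_le_sum_abs _ _
      _ ≤ ∑ _b ∈ (Finset.univ.erase j), (2*(r:ℝ))^r * (2*(r:ℝ)) := by
          apply Finset.sum_le_sum
          intro b hb
          rw [eval_mul, abs_mul, eval_prod]
          apply mul_le_mul _ _ (abs_nonneg _) (by positivity)
          · rw [Finset.abs_prod]
            calc ∏ a ∈ (Finset.univ.erase j).erase b, |(Lagrange.basisDivisor (v j) (v a)).eval ξ|
                ≤ ∏ _a ∈ (Finset.univ.erase j).erase b, (2*(r:ℝ)) := by
                  apply Finset.prod_le_prod (fun _ _ => abs_nonneg _)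
                  intro a ha
                  have haj : a ≠ j := Finset.ne_of_mem_erase (Finset.mem_of_mem_erase ha)
                  exact hbd j a (Ne.symm haj)
              _ = (2*(r:ℝ))^((Finset.univ.erase j).erase b).card := by
                  rw [Finset.prod_const]
              _ ≤ (2*(r:ℝ))^r := by
                  apply pow_le_pow_right₀ h2r
                  calc ((Finset.univ.erase j).erase b).card ≤ (Finset.univ.erase j).card :=
                        Finset.card_le_card (Finset.erase_subset _ _)
                    _ ≤ (Finset.univ : Finset (Fin r)).card := Finset.card_le_card (Finset.erase_subset _ _)
                    _ = r := by rw [Finset.card_univ, Fintype.card_fin]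
          · rw [hbdd]
            rw [eval_C]
            exact hinv j b (Ne.symm (Finset.ne_of_mem_erase hb))
      _ = ((Finset.univ.erase j).card : ℝ) * ((2*(r:ℝ))^r * (2*(r:ℝ))) := by
          rw [Finset.sum_const, nsmul_eq_mul]
      _ ≤ (r:ℝ) * (2*r)^(r+1) := by
          have hc : ((Finset.univ.erase j).card : ℝ) ≤ r := by
            have : (Finset.univ.erase j).card ≤ r := by
              calc (Finset.univ.erase j).card ≤ (Finset.univ : Finset (Fin r)).card :=
                    Finset.card_le_card (Finset.erase_subset _ _)
                _ = r := by rw [Finset.card_univ, Fintype.card_fin]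
            exact_mod_cast this
          rw [pow_succ]
          apply mul_le_mul hc le_rfl (by positivity) (by positivity)
  -- now put together
  conv_lhs => rw [hrep]
  rw [Lagrange.interpolate_apply, derivative_sum]
  rw [eval_finset_sum]
  calc |∑ j : Fin r, (Polynomial.derivative (C (g.eval (v j)) * Lagrange.basis Finset.univ v j)).eval ξ|
      ≤ ∑ j : Fin r, |(Polynomial.derivative (C (g.eval (v j)) * Lagrange.basis Finset.univ v j)).eval ξ| :=
        Finset.abs_sum_le_sum_abs _ _
    _ ≤ ∑ _j : Fin r, M * ((r:ℝ) * (2*r)^(r+1)) := by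
        apply Finset.sum_le_sum
        intro j _
        rw [derivative_C_mul, eval_mul, eval_C, abs_mul]
        exact mul_le_mul (hM j) (hB j) (abs_nonneg _) hM0
    _ = (r:ℝ) * (M * ((r:ℝ) * (2*r)^(r+1))) := by
        rw [Finset.sum_const, nsmul_eq_mul, Finset.card_univ, Fintype.card_fin]
    _ = ((r:ℝ)^2 * (2*r)^(r+1)) * M := by ring

set_option maxHeartbeats 1000000 in
theorem polynomial_sup_norm_bound_aux (r : ℕ) (hr : 1 ≤ r) (c₀ : ℝ) (hc₀ : 0 < c₀)
    (exists_near : ∀ (n : ℕ), 1 ≤ n → ∀ (x : ℕ → ℝ) (w : ℝ),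
      0 ≤ x 1 → (∀ i j, 1 ≤ i → i < j → j ≤ n → x i < x j) → x n ≤ 1 →
      x 1 ≤ w → (∀ i, 2 ≤ i → i ≤ n → x i - x (i-1) ≤ w) → 1 - x n ≤ w →
      ∀ y : ℝ, 0 ≤ y → y ≤ 1 → ∃ i, 1 ≤ i ∧ i ≤ n ∧ |x i - y| ≤ w)
    (deriv_bound : ∀ (r : ℕ), 1 ≤ r → ∀ (v : Fin r → ℝ),
      (∀ j, v j ∈ Set.Icc (0:ℝ) 1) →
      (∀ j k : Fin r, j ≠ k → 1/(2*r) ≤ |v j - v k|) →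
      ∀ (g : Polynomial ℝ), g.natDegree ≤ r - 1 →
      ∀ (M : ℝ), (∀ j, |g.eval (v j)| ≤ M) →
      ∀ (ξ : ℝ), ξ ∈ Set.Icc (0:ℝ) 1 →
      |g.derivative.eval ξ| ≤ ((r:ℝ)^2 * (2*r)^(r+1)) * M) :
    ∃ C : ℝ, 0 < C ∧ ∃ N : ℕ, ∀ n : ℕ, N ≤ n → ∀ x : ℕ → ℝ,
      0 ≤ x 1 →
      (∀ i j : ℕ, 1 ≤ i → i < j → j ≤ n → x i < x j) →
      x n ≤ 1 →
      x 1 ≤ c₀ * Real.log n / n →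
      (∀ i : ℕ, 2 ≤ i → i ≤ n → x i - x (i - 1) ≤ c₀ * Real.log n / n) →
      1 - x n ≤ c₀ * Real.log n / n →
      ∀ g : Polynomial ℝ, g.natDegree ≤ r - 1 →
        (∑ i ∈ Finset.Icc 1 n, (g.eval (x i)) ^ 2 = 1) →
        ∀ i : ℕ, 1 ≤ i → i ≤ n →
          |g.eval (x i)| ≤ C * Real.log n / Real.sqrt n := by
  classical
  have hr0 : (0:ℝ) < r := by exact_mod_cast hr
  have hr1 : (1:ℝ) ≤ r := by exact_mod_cast hr
  set K : ℝ := (r:ℝ)^2 * (2*r)^(r+1) with hKdef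
  have hK1 : 1 ≤ K := by
    have h1 : (1:ℝ) ≤ (r:ℝ)^2 := one_le_pow₀ hr1
    have h2 : (1:ℝ) ≤ (2*(r:ℝ))^(r+1) := one_le_pow₀ (by linarith)
    nlinarith
  have hK0 : (0:ℝ) < K := by linarith
  set δ : ℝ := 1/(2*K) with hδdef
  have hδ0 : 0 < δ := by positivity
  have hδhalf : δ ≤ 1/2 := by
    rw [hδdef, div_le_div_iff₀ (by linarith) (by norm_num)]
    linarith
  set ε : ℝ := min (1/(8*(r:ℝ))) (δ/8) with hεdef
  have hε0 : 0 < ε := lt_min (by positivity) (by positivity)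
  refine ⟨Real.sqrt (48 * c₀ * K), Real.sqrt_pos.mpr (by positivity), ⌈(2*c₀/ε)^2⌉₊ + 3, ?_⟩
  intro n hn x hx0 hmono hxn h1gap hgap hend g hdeg hnorm i hi1 hin
  have hn3 : 3 ≤ n := by omega
  have hn1 : 1 ≤ n := by omega
  have hnR : (3:ℝ) ≤ n := by exact_mod_cast hn3
  have hn0 : (0:ℝ) < n := by linarith only [hnR]
  have hlog1 : 1 ≤ Real.log n := by
    rw [← Real.log_exp 1]
    apply Real.log_le_log (Real.exp_pos 1)
    calc Real.exp 1 ≤ 2.7182818286 := le_of_lt Real.exp_one_lt_d9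
      _ ≤ 3 := by norm_num
      _ ≤ n := hnR
  have hlog0 : 0 < Real.log n := by linarith only [hlog1]
  set w : ℝ := c₀ * Real.log n / n with hwdef
  have hw0 : 0 < w := by positivity
  have hsqn0 : 0 < Real.sqrt n := Real.sqrt_pos.mpr hn0
  have hss : Real.sqrt n * Real.sqrt n = n := Real.mul_self_sqrt (le_of_lt hn0)
  have hlogle : Real.log n ≤ 2 * Real.sqrt n := by
    have h1 : Real.log n = 2 * Real.log (Real.sqrt n) := by
      rw [Real.log_sqrt (le_of_lt hn0)]; ring
    have h2 : Real.log (Real.sqrt n) ≤ Real.sqrt n - 1 :=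
      Real.log_le_sub_one_of_pos hsqn0
    linarith only [h1, h2, hsqn0]
  have hnceil : ((2*c₀/ε)^2 : ℝ) ≤ n := by
    calc ((2*c₀/ε)^2 : ℝ) ≤ (⌈(2*c₀/ε)^2⌉₊ : ℝ) := Nat.le_ceil _
      _ ≤ n := by exact_mod_cast (by omega : ⌈((2*c₀/ε)^2 : ℝ)⌉₊ ≤ n)
  have hsqrt_ge : 2*c₀/ε ≤ Real.sqrt n := by
    rw [← Real.sqrt_sq (by positivity : (0:ℝ) ≤ 2*c₀/ε)]
    exact Real.sqrt_le_sqrt hnceil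
  have hwε : w ≤ ε := by
    have h1 : w ≤ 2*c₀/Real.sqrt n := by
      rw [hwdef, div_le_div_iff₀ hn0 hsqn0]
      calc c₀ * Real.log n * Real.sqrt n ≤ c₀ * (2*Real.sqrt n) * Real.sqrt n := by
            have := mul_le_mul_of_nonneg_right
              (mul_le_mul_of_nonneg_left hlogle hc₀.le) hsqn0.le
            linarith only [this]
        _ = 2*c₀*(Real.sqrt n * Real.sqrt n) := by ring
        _ = 2*c₀*n := by rw [hss]
    have h2 : 2*c₀/Real.sqrt n ≤ ε := by
      rw [div_le_iff₀ hsqn0]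
      rw [div_le_iff₀ hε0] at hsqrt_ge
      linarith only [hsqrt_ge]
    linarith only [h1, h2]
  have hwδ8 : w ≤ δ/8 := le_trans hwε (min_le_right _ _)
  have hw8r : w ≤ 1/(8*(r:ℝ)) := le_trans hwε (min_le_left _ _)
  -- grid points lie in [0,1]
  have hgrid : ∀ j, 1 ≤ j → j ≤ n → x j ∈ Set.Icc (0:ℝ) 1 := by
    intro j h1 h2
    constructor
    · rcases eq_or_lt_of_le h1 with he | hlt
      · rw [← he]; exact hx0
      · linarith only [hx0, hmono 1 j le_rfl hlt h2]
    · rcases eq_or_lt_of_le h2 with he | hlt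
      · rw [he]; exact hxn
      · linarith only [hxn, hmono j n h1 hlt le_rfl]
  have hnet : ∀ y : ℝ, 0 ≤ y → y ≤ 1 → ∃ i', 1 ≤ i' ∧ i' ≤ n ∧ |x i' - y| ≤ w :=
    fun y hy0 hy1 => exists_near n hn1 x w hx0 hmono hxn h1gap hgap hend y hy0 hy1
  -- the maximum of the grid values
  have hne : (Finset.Icc 1 n).Nonempty := ⟨1, Finset.mem_Icc.mpr ⟨le_rfl, hn1⟩⟩
  obtain ⟨i₀, hi₀mem, hi₀⟩ := Finset.exists_mem_eq_sup' hne (fun j => |g.eval (x j)|)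
  rw [Finset.mem_Icc] at hi₀mem
  set M : ℝ := |g.eval (x i₀)| with hMdef
  have hMle : ∀ j, 1 ≤ j → j ≤ n → |g.eval (x j)| ≤ M := by
    intro j hj1 hj2
    rw [← hi₀]
    exact Finset.le_sup' (f := fun j => |g.eval (x j)|) (Finset.mem_Icc.mpr ⟨hj1, hj2⟩)
  have hM0 : 0 ≤ M := abs_nonneg _
  -- choose interpolation nodes
  have hy01 : ∀ j : Fin r, 0 ≤ (2*((j:ℕ):ℝ)+1)/(2*(r:ℝ)) ∧ (2*((j:ℕ):ℝ)+1)/(2*(r:ℝ)) ≤ 1 := by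
    intro j
    have hj : ((j:ℕ):ℝ) + 1 ≤ (r:ℝ) := by exact_mod_cast j.isLt
    constructor
    · positivity
    · rw [div_le_one (by positivity)]; linarith only [hj]
  have hnode : ∀ j : Fin r, ∃ i', 1 ≤ i' ∧ i' ≤ n ∧
      |x i' - (2*((j:ℕ):ℝ)+1)/(2*(r:ℝ))| ≤ w :=
    fun j => hnet _ (hy01 j).1 (hy01 j).2
  choose node hnode1 hnode2 hnode3 using hnode
  set v : Fin r → ℝ := fun j => x (node j) with hvdef
  have hv01 : ∀ j, v j ∈ Set.Icc (0:ℝ) 1 := fun j => hgrid (node j) (hnode1 j) (hnode2 j)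
  have hsep : ∀ j k : Fin r, j ≠ k → 1/(2*(r:ℝ)) ≤ |v j - v k| := by
    intro j k hjk
    have h1 : (1:ℝ) ≤ |((j:ℕ):ℝ) - ((k:ℕ):ℝ)| := by
      have hne2 : ((j:ℕ):ℤ) ≠ ((k:ℕ):ℤ) := by
        intro h; exact hjk (Fin.ext (by exact_mod_cast h))
      have h2 : (1:ℤ) ≤ |((j:ℕ):ℤ) - ((k:ℕ):ℤ)| := Int.one_le_abs (sub_ne_zero.mpr hne2)
      exact_mod_cast h2
    have hyd : 1/(r:ℝ) ≤ |(2*((j:ℕ):ℝ)+1)/(2*(r:ℝ)) - (2*((k:ℕ):ℝ)+1)/(2*(r:ℝ))| := by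
      have he : (2*((j:ℕ):ℝ)+1)/(2*(r:ℝ)) - (2*((k:ℕ):ℝ)+1)/(2*(r:ℝ))
          = (((j:ℕ):ℝ) - ((k:ℕ):ℝ))/(r:ℝ) := by field_simp; ring
      rw [he, abs_div, abs_of_pos hr0]
      gcongr
    have t1 := hnode3 j
    have t2 := hnode3 k
    set A := (2*((j:ℕ):ℝ)+1)/(2*(r:ℝ))
    set B := (2*((k:ℕ):ℝ)+1)/(2*(r:ℝ))
    have tri : |A - B| ≤ |A - v j| + |v j - v k| + |v k - B| := by
      calc |A - B| ≤ |A - v j| + |v j - B| := abs_sub_le _ _ _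
        _ ≤ |A - v j| + (|v j - v k| + |v k - B|) := by
            linarith only [abs_sub_le (v j) (v k) B]
        _ = |A - v j| + |v j - v k| + |v k - B| := by ring
    have t1' : |A - v j| ≤ w := by rw [abs_sub_comm]; exact t1
    have t2' : |v k - B| ≤ w := t2
    have harith : 2*(1/(8*(r:ℝ))) + 1/(2*(r:ℝ)) ≤ 1/(r:ℝ) := by
      have h2 : 2*(1/(8*(r:ℝ))) + 1/(2*(r:ℝ)) = (3/4)*(1/(r:ℝ)) := by ring
      have h3 : (0:ℝ) ≤ 1/(r:ℝ) := by positivity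
      linarith only [h2, h3]
    linarith only [hyd, tri, t1', t2', hw8r, harith]
  have hvM : ∀ j, |g.eval (v j)| ≤ M := fun j => hMle (node j) (hnode1 j) (hnode2 j)
  -- Lipschitz bound on [0,1]
  have hlip : ∀ s t : ℝ, s ∈ Set.Icc (0:ℝ) 1 → t ∈ Set.Icc (0:ℝ) 1 →
      |g.eval t - g.eval s| ≤ (K*M) * |t - s| := by
    intro s t hs ht
    have hb : ∀ ξ ∈ Set.Icc (0:ℝ) 1, ‖g.derivative.eval ξ‖ ≤ K*M := by
      intro ξ hξ
      rw [Real.norm_eq_abs, hKdef]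
      exact deriv_bound r hr v hv01 hsep g hdeg M hvM ξ hξ
    have := (convex_Icc (0:ℝ) 1).norm_image_sub_le_of_norm_hasDerivWithin_le
      (f := fun u => g.eval u) (f' := fun u => g.derivative.eval u)
      (fun u _ => (g.hasDerivAt u).hasDerivWithinAt) hb hs ht
    simpa [Real.norm_eq_abs] using this
  -- interval around the maximizer
  have hx₀ := hgrid i₀ hi₀mem.1 hi₀mem.2
  set a : ℝ := if x i₀ ≤ 1/2 then x i₀ else x i₀ - δ with hadef
  have ha0 : 0 ≤ a := by
    rw [hadef]; split_ifs with h
    · exact hx₀.1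
    · push_neg at h; linarith only [h, hδhalf]
  have ha1 : a + δ ≤ 1 := by
    rw [hadef]; split_ifs with h
    · linarith only [h, hδhalf]
    · linarith only [hx₀.2, hδ0]
  have haI : ∀ t : ℝ, a ≤ t → t ≤ a + δ → |t - x i₀| ≤ δ := by
    intro t h1 h2
    rw [abs_le]
    by_cases h : x i₀ ≤ 1/2
    · rw [hadef, if_pos h] at h1 h2
      constructor <;> linarith only [h1, h2, hδ0]
    · rw [hadef, if_neg h] at h1 h2
      constructor <;> linarith only [h1, h2, hδ0]
  -- values near the maximizer are at least M/2
  have hhalf : ∀ t : ℝ, t ∈ Set.Icc (0:ℝ) 1 → |t - x i₀| ≤ δ → M/2 ≤ |g.eval t| := by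
    intro t ht hd
    have hl := hlip (x i₀) t hx₀ ht
    have h2 : K*M*|t - x i₀| ≤ K*M*δ :=
      mul_le_mul_of_nonneg_left hd (by positivity)
    have h3 : K*M*δ = M/2 := by rw [hδdef]; field_simp
    have h5 : M ≤ |g.eval t| + |g.eval (x i₀) - g.eval t| := by
      have h5' := abs_add_le (g.eval t) (g.eval (x i₀) - g.eval t)
      rw [hMdef]
      simpa using h5'
    have h6 : |g.eval (x i₀) - g.eval t| = |g.eval t - g.eval (x i₀)| := abs_sub_comm _ _
    linarith only [hl, h2, h3, h5, h6]
  -- counting grid points in the interval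
  set m : ℕ := ⌊(δ - w)/(3*w)⌋₊ with hmdef
  have hmle : (m:ℝ) ≤ (δ - w)/(3*w) :=
    Nat.floor_le (div_nonneg (by linarith only [hwδ8, hδ0, hw0]) (by linarith only [hw0]))
  have hmle' : (m:ℝ)*(3*w) ≤ δ - w := by
    rw [le_div_iff₀ (by linarith only [hw0])] at hmle; exact hmle
  have hmgt : (δ - w)/(3*w) - 1 < (m:ℝ) := Nat.sub_one_lt_floor _
  have hmlb : δ/(6*w) ≤ (m:ℝ) := by
    have h2 : (δ - w)/(3*w) - 1 - δ/(6*w) = (δ - 8*w)/(6*w) := by field_simp; ring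
    have h3 : 0 ≤ (δ - 8*w)/(6*w) :=
      div_nonneg (by linarith only [hwδ8]) (by linarith only [hw0])
    linarith only [hmgt, h2, h3]
  have hyb : ∀ j : ℕ, 1 ≤ j → j ≤ m → 3*(j:ℝ)*w ≤ δ - w := by
    intro j hj1 hjm
    have hjle : (j:ℝ) ≤ (m:ℝ) := by exact_mod_cast hjm
    calc 3*(j:ℝ)*w = (j:ℝ)*(3*w) := by ring
      _ ≤ (m:ℝ)*(3*w) := mul_le_mul_of_nonneg_right hjle (by positivity)
      _ ≤ δ - w := hmle'
  have hι0 : ∀ j : ℕ, 1 ≤ j → j ≤ m → ∃ i', 1 ≤ i' ∧ i' ≤ n ∧ |x i' - (a + 3*(j:ℝ)*w)| ≤ w := by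
    intro j hj1 hjm
    apply hnet
    · have h4 : (0:ℝ) ≤ 3*(j:ℝ)*w := by positivity
      linarith only [ha0, h4]
    · have h4 := hyb j hj1 hjm
      linarith only [ha1, h4, hw0]
  choose! ι hι1 hι2 hι3 using hι0
  have hstep : ∀ j : ℕ, 1 ≤ j → j ≤ m → (M/2)^2 ≤ (g.eval (x (ι j)))^2 := by
    intro j hj1 hjm
    have h3 := hι3 j hj1 hjm
    have habs := abs_le.mp h3
    have hj1' : (1:ℝ) ≤ (j:ℝ) := by exact_mod_cast hj1
    have hjw : w ≤ (j:ℝ)*w := le_mul_of_one_le_left hw0.le hj1'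
    have hb1 : a ≤ x (ι j) := by linarith only [habs.1, hjw, hw0]
    have hb2 : x (ι j) ≤ a + δ := by
      linarith only [habs.2, hyb j hj1 hjm]
    have hmem := hgrid (ι j) (hι1 j hj1 hjm) (hι2 j hj1 hjm)
    have hhalfj := hhalf (x (ι j)) hmem (haI _ hb1 hb2)
    calc (M/2)^2 ≤ |g.eval (x (ι j))|^2 := by
          apply pow_le_pow_left₀ (by positivity) hhalfj
      _ = (g.eval (x (ι j)))^2 := sq_abs _
  have hinjι : Set.InjOn ι ↑(Finset.Icc 1 m) := by
    intro j hj k hk hjk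
    rw [Finset.coe_Icc, Set.mem_Icc] at hj hk
    by_contra hne2
    have h3j := hι3 j hj.1 hj.2
    have h3k := hι3 k hk.1 hk.2
    rw [hjk] at h3j
    have hd : |(a + 3*(j:ℝ)*w) - (a + 3*(k:ℝ)*w)| ≤ 2*w := by
      calc |(a + 3*(j:ℝ)*w) - (a + 3*(k:ℝ)*w)|
          ≤ |(a + 3*(j:ℝ)*w) - x (ι k)| + |x (ι k) - (a + 3*(k:ℝ)*w)| := abs_sub_le _ _ _
        _ ≤ w + w := by
            rw [abs_sub_comm] at h3j
            exact add_le_add h3j h3k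
        _ = 2*w := by ring
    have h1 : (1:ℝ) ≤ |(j:ℝ) - (k:ℝ)| := by
      have hne3 : (j:ℤ) ≠ (k:ℤ) := by exact_mod_cast hne2
      have h2 : (1:ℤ) ≤ |(j:ℤ) - (k:ℤ)| := Int.one_le_abs (sub_ne_zero.mpr hne3)
      exact_mod_cast h2
    have he : (a + 3*(j:ℝ)*w) - (a + 3*(k:ℝ)*w) = 3*w*((j:ℝ) - (k:ℝ)) := by ring
    rw [he, abs_mul, abs_of_pos (by linarith only [hw0] : (0:ℝ) < 3*w)] at hd
    have h7 : 3*w*1 ≤ 3*w*|(j:ℝ) - (k:ℝ)| :=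
      mul_le_mul_of_nonneg_left h1 (by positivity)
    linarith only [hd, h7, hw0]
  have hT : ((Finset.Icc 1 m).image ι) ⊆ Finset.Icc 1 n := by
    intro t ht
    obtain ⟨j, hj, rfl⟩ := Finset.mem_image.mp ht
    rw [Finset.mem_Icc] at hj ⊢
    exact ⟨hι1 j hj.1 hj.2, hι2 j hj.1 hj.2⟩
  have hcard : ((Finset.Icc 1 m).image ι).card = m := by
    rw [Finset.card_image_of_injOn hinjι, Nat.card_Icc]; omega
  have hforall : ∀ t ∈ (Finset.Icc 1 m).image ι, (M/2)^2 ≤ (g.eval (x t))^2 := by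
    intro t ht
    obtain ⟨j, hj, rfl⟩ := Finset.mem_image.mp ht
    rw [Finset.mem_Icc] at hj
    exact hstep j hj.1 hj.2
  have hsum2 : (m:ℝ) * ((M/2)^2) ≤ ∑ t ∈ (Finset.Icc 1 m).image ι, (g.eval (x t))^2 := by
    have hc := Finset.card_nsmul_le_sum ((Finset.Icc 1 m).image ι)
      (fun t => (g.eval (x t))^2) ((M/2)^2) hforall
    rw [hcard] at hc
    rw [← nsmul_eq_mul]
    exact hc
  have hsum1 : ∑ t ∈ (Finset.Icc 1 m).image ι, (g.eval (x t))^2 ≤ 1 := by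
    rw [← hnorm]
    exact Finset.sum_le_sum_of_subset_of_nonneg hT (fun t _ _ => sq_nonneg _)
  have hkey : (m:ℝ) * ((M/2)^2) ≤ 1 := le_trans hsum2 hsum1
  -- conclude the bound on M
  have hM2 : M^2 ≤ 24*w/δ := by
    have h1 : δ/(6*w) * ((M/2)^2) ≤ 1 :=
      le_trans (mul_le_mul_of_nonneg_right hmlb (by positivity)) hkey
    have h2 : δ/(6*w) * ((M/2)^2) = δ*M^2/(24*w) := by
      rw [div_mul_eq_mul_div, div_eq_div_iff (by positivity) (by positivity)]
      ring
    rw [h2, div_le_one (by linarith only [hw0])] at h1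
    rw [le_div_iff₀ hδ0]
    linarith only [h1]
  have hMle2 : M ≤ Real.sqrt (24*w/δ) := by
    rw [← Real.sqrt_sq hM0]
    exact Real.sqrt_le_sqrt hM2
  have heq : 24*w/δ = (48*c₀*K) * (Real.log n / n) := by
    rw [hwdef, hδdef]; field_simp; ring
  have hsq : Real.sqrt (24*w/δ)
      = Real.sqrt (48*c₀*K) * (Real.sqrt (Real.log n) / Real.sqrt n) := by
    rw [heq, Real.sqrt_mul (by positivity), Real.sqrt_div hlog0.le]
  have hfin : Real.sqrt (Real.log n) ≤ Real.log n := by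
    have h7 : Real.log n * 1 ≤ Real.log n * Real.log n :=
      mul_le_mul_of_nonneg_left hlog1 hlog0.le
    calc Real.sqrt (Real.log n) ≤ Real.sqrt ((Real.log n)^2) := by
          apply Real.sqrt_le_sqrt
          rw [pow_two]
          linarith only [h7]
      _ = Real.log n := Real.sqrt_sq hlog0.le
  calc |g.eval (x i)| ≤ M := hMle i hi1 hin
    _ ≤ Real.sqrt (24*w/δ) := hMle2
    _ = Real.sqrt (48*c₀*K) * (Real.sqrt (Real.log n) / Real.sqrt n) := hsq
    _ ≤ Real.sqrt (48*c₀*K) * (Real.log n / Real.sqrt n) := by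
        apply mul_le_mul_of_nonneg_left _ (Real.sqrt_nonneg _)
        gcongr
    _ = Real.sqrt (48*c₀*K) * Real.log n / Real.sqrt n := by ring

/-- Lemma 18: for every `r ≥ 1` and `c₀ > 0` there exist `C > 0` and `N` such that for all
`n ≥ N`, and all design points `0 ≤ x₁ < ⋯ < xₙ ≤ 1` whose gaps (including the boundary
gaps) are at most `c₀·(log n)/n`, every polynomial `g` of degree at most `r − 1` with
`∑ᵢ g(xᵢ)² = 1` satisfies `maxᵢ |g(xᵢ)| ≤ C·(log n)/√n`. -/
theorem polynomial_sup_norm_bound (r : ℕ) (hr : 1 ≤ r) (c₀ : ℝ) (hc₀ : 0 < c₀) :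
    ∃ C : ℝ, 0 < C ∧ ∃ N : ℕ, ∀ n : ℕ, N ≤ n → ∀ x : ℕ → ℝ,
      0 ≤ x 1 →
      (∀ i j : ℕ, 1 ≤ i → i < j → j ≤ n → x i < x j) →
      x n ≤ 1 →
      x 1 ≤ c₀ * Real.log n / n →
      (∀ i : ℕ, 2 ≤ i → i ≤ n → x i - x (i - 1) ≤ c₀ * Real.log n / n) →
      1 - x n ≤ c₀ * Real.log n / n →
      ∀ g : Polynomial ℝ, g.natDegree ≤ r - 1 →
        (∑ i ∈ Finset.Icc 1 n, (g.eval (x i)) ^ 2 = 1) →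
        ∀ i : ℕ, 1 ≤ i → i ≤ n →
          |g.eval (x i)| ≤ C * Real.log n / Real.sqrt n := by
  exact polynomial_sup_norm_bound_aux r hr c₀ hc₀ exists_near deriv_bound
end
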